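/- arXiv:1212.3115 — 2 statements merged into one kernel-verified Lean document; each statement's English description precedes it below -/
import Mathlib

section
/- Let k be a finite field of q elements, A = k[T], φ the Carlitz module, and 𝔭 ⊂ A a maximal ideal of degree d generated by the monic irreducible P. Then the polynomial φ_P(x)/x has degree q^d − 1 and is an Eisenstein polynomial at 𝔭 up to the leading coefficient; in particular its constant term equals P (the reduction of each non-leading coefficient lies in 𝔭, and the constant term of φ_P(x)/x is P). -/
open Polynomial

/-!
Reduce modulo `𝔭`. Over `F = A/𝔭 = k(t)`, the reduction `ψ` of `φ_P` is a `q`-polynomial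
`∑ bᵢ X^(q^i)` of degree at most `q^d` with `b₀ = P mod 𝔭 = 0`, and it commutes with the
reduction `t X + X^q` of `φ_T`. Comparing coefficients of `X^(q^(j+1))` on both sides gives
`t b_{j+1} + b_j^q = b_{j+1} t^(q^(j+1)) + b_j`; since the Frobenius of `F/k` has order `d`,
`t^(q^m) ≠ t` for `0 < m < d`, and induction yields `b_j = 0` for `j < d`. So `φ_P ≡ c X^(q^d)`
modulo `𝔭`, while `φ_P` has degree `q^d`, no constant term and linear coefficient `P`.
-/

theorem FiniteField.add_pow_card_pow (k : Type*) {R : Type*} [Field k] [Fintype k] [CommRing R]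
    [Algebra k R] (a b : R) (i : ℕ) :
    (a + b) ^ Fintype.card k ^ i = a ^ Fintype.card k ^ i + b ^ Fintype.card k ^ i := by
  simpa only [AlgHom.coe_pow, coe_frobeniusAlgHom, pow_iterate] using
    map_add (frobeniusAlgHom k R ^ i) a b

namespace Polynomial

theorem coeff_one_comp {R : Type*} [CommRing R] (f : R[X]) {g : R[X]} (hg : g.coeff 0 = 0) :
    (f.comp g).coeff 1 = f.coeff 1 * g.coeff 1 := by
  have coeff_one_eq (h : R[X]) : h.coeff 1 = h.derivative.eval 0 := by
    rw [← coeff_zero_eq_eval_zero, coeff_derivative]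
    simp
  rw [coeff_one_eq, derivative_comp, eval_mul, eval_comp, ← coeff_zero_eq_eval_zero g, hg,
    ← coeff_one_eq, ← coeff_one_eq, mul_comm]

section QPolynomials

variable {R : Type*} [CommSemiring R] {q : ℕ}

variable (R q) in
def qPolynomials : Submodule R R[X] where
  carrier := {f | ∀ n, f.coeff n ≠ 0 → ∃ i, n = q ^ i}
  add_mem' {f g} hf hg n h := by
    by_cases hfn : f.coeff n = 0
    · exact hg n (by simpa [hfn] using h)
    · exact hf n hfn
  zero_mem' n h := absurd (coeff_zero n) h
  smul_mem' a f hf n h := hf n fun h0 => h (by rw [coeff_smul, h0, smul_zero])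

theorem C_mul_X_pow_mem_qPolynomials (a : R) (i : ℕ) : C a * X ^ q ^ i ∈ qPolynomials R q := by
  intro n h
  rw [coeff_C_mul_X_pow] at h
  exact ⟨i, by_contra fun hn => h (if_neg hn)⟩

theorem X_mem_qPolynomials : (X : R[X]) ∈ qPolynomials R q := by
  simpa using C_mul_X_pow_mem_qPolynomials (q := q) (1 : R) 0

theorem X_pow_mem_qPolynomials : (X : R[X]) ^ q ∈ qPolynomials R q := by
  simpa using C_mul_X_pow_mem_qPolynomials (q := q) (1 : R) 1

@[elab_as_elim]
theorem qPolynomials.induction_on {motive : (f : R[X]) → f ∈ qPolynomials R q → Prop}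
    (monomial : ∀ a i, motive (C a * X ^ q ^ i) (C_mul_X_pow_mem_qPolynomials a i))
    (add : ∀ f g hf hg, motive f hf → motive g hg →
      motive (f + g) (Submodule.add_mem _ hf hg))
    {f : R[X]} (hf : f ∈ qPolynomials R q) : motive f hf := by
  suffices ∃ h, motive f h from this.elim fun _ h => h
  rw [as_sum_support_C_mul_X_pow f]
  refine Finset.sum_induction _ (fun g => ∃ h, motive g h)
    (fun _ _ ⟨_, h₁⟩ ⟨_, h₂⟩ => ⟨_, add _ _ _ _ h₁ h₂⟩)
    ⟨Submodule.zero_mem _, by simpa using monomial 0 0⟩ fun n hn => ?_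
  obtain ⟨i, rfl⟩ := hf n (mem_support_iff.mp hn)
  exact ⟨_, monomial _ i⟩

theorem map_mem_qPolynomials {S : Type*} [CommSemiring S] (φ : R →+* S) {f : R[X]}
    (hf : f ∈ qPolynomials R q) : f.map φ ∈ qPolynomials S q :=
  fun n h => hf n fun h0 => h (by rw [coeff_map, h0, map_zero])

theorem coeff_zero_eq_zero_of_mem_qPolynomials (hq : q ≠ 0) {f : R[X]}
    (hf : f ∈ qPolynomials R q) : f.coeff 0 = 0 := by
  by_contra h
  obtain ⟨i, hi⟩ := hf 0 h
  exact pow_ne_zero i hq hi.symm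

end QPolynomials

section Frobenius

variable (k : Type*) {R : Type*} [Field k] [Fintype k] [CommRing R] [Algebra k R]

theorem pow_card_eq_expand_map (f : R[X]) :
    f ^ Fintype.card k = expand R (Fintype.card k) (f.map (FiniteField.frobeniusAlgHom k R)) := by
  induction f using Polynomial.induction_on' with
  | add f g hf hg =>
    rw [← pow_one (Fintype.card k), FiniteField.add_pow_card_pow, pow_one, hf, hg,
      Polynomial.map_add, map_add]
  | monomial n a =>
    rw [monomial_pow, map_monomial, expand_monomial, RingHom.coe_coe,
      FiniteField.coe_frobeniusAlgHom, mul_comm]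

theorem coeff_pow_card (f : R[X]) (n : ℕ) :
    (f ^ Fintype.card k).coeff n =
      if Fintype.card k ∣ n then f.coeff (n / Fintype.card k) ^ Fintype.card k else 0 := by
  rw [pow_card_eq_expand_map, coeff_expand Fintype.card_pos, coeff_map,
    RingHom.coe_coe, FiniteField.coe_frobeniusAlgHom]

theorem coeff_pow_card_card_mul (f : R[X]) (m : ℕ) :
    (f ^ Fintype.card k).coeff (Fintype.card k * m) = f.coeff m ^ Fintype.card k := by
  rw [coeff_pow_card, if_pos (dvd_mul_right _ _), Nat.mul_div_cancel_left _ Fintype.card_pos]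

theorem pow_card_mem_qPolynomials {f : R[X]} (hf : f ∈ qPolynomials R (Fintype.card k)) :
    f ^ Fintype.card k ∈ qPolynomials R (Fintype.card k) := by
  intro n h
  rw [coeff_pow_card] at h
  split_ifs at h with hdvd
  · obtain ⟨i, hi⟩ := hf _ fun h0 => h (by rw [h0, zero_pow Fintype.card_ne_zero])
    exact ⟨i + 1, by rw [pow_succ', ← hi, Nat.mul_div_cancel' hdvd]⟩
  · exact absurd rfl h

theorem comp_mem_qPolynomials {f g : R[X]} (hf : f ∈ qPolynomials R (Fintype.card k))
    (hg : g ∈ qPolynomials R (Fintype.card k)) :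
    f.comp g ∈ qPolynomials R (Fintype.card k) := by
  have pow_mem (i : ℕ) : g ^ Fintype.card k ^ i ∈ qPolynomials R (Fintype.card k) := by
    induction i with
    | zero => simpa using hg
    | succ i ih => rw [pow_succ, pow_mul]; exact pow_card_mem_qPolynomials k ih
  induction hf using qPolynomials.induction_on with
  | monomial a i => simpa [C_mul'] using Submodule.smul_mem _ a (pow_mem i)
  | add f₁ f₂ _ _ h₁ h₂ => rw [add_comp]; exact Submodule.add_mem _ h₁ h₂

end Frobenius

section Carlitz

variable (k : Type*) [Fintype k] {R : Type*} [CommRing R]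

/-- The Carlitz polynomial `φ_T` with `T` specialized to `t`. -/
noncomputable def carlitzT (t : R) : R[X] := C t * X + X ^ Fintype.card k

theorem map_carlitzT {S : Type*} [CommRing S] (f : R →+* S) (t : R) :
    (carlitzT k t).map f = carlitzT k (f t) := by
  simp [carlitzT]

theorem carlitzT_mem_qPolynomials (t : R) : carlitzT k t ∈ qPolynomials R (Fintype.card k) := by
  simpa [carlitzT, C_mul'] using
    Submodule.add_mem _ (Submodule.smul_mem _ t X_mem_qPolynomials) X_pow_mem_qPolynomials

theorem natDegree_carlitzT [Nontrivial k] [Nontrivial R] (t : R) :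
    (carlitzT k t).natDegree = Fintype.card k := by
  rw [carlitzT, natDegree_add_eq_right_of_natDegree_lt] <;> rw [natDegree_X_pow]
  exact ((natDegree_C_mul_le t X).trans natDegree_X_le).trans_lt Fintype.one_lt_card

variable [Field k] [Algebra k R]

theorem coeff_card_mul_carlitzT_comp (t : R) (f : R[X]) (m : ℕ) :
    ((carlitzT k t).comp f).coeff (Fintype.card k * m) =
      t * f.coeff (Fintype.card k * m) + f.coeff m ^ Fintype.card k := by
  simp [carlitzT, coeff_pow_card_card_mul]

theorem coeff_card_mul_comp_carlitzT (t : R) {f : R[X]}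
    (hf : f ∈ qPolynomials R (Fintype.card k)) (m : ℕ) :
    (f.comp (carlitzT k t)).coeff (Fintype.card k * m) =
      f.coeff (Fintype.card k * m) * t ^ (Fintype.card k * m) + f.coeff m := by
  induction hf using qPolynomials.induction_on with
  | monomial a i =>
    rw [mul_comp, C_comp, X_pow_comp, carlitzT, FiniteField.add_pow_card_pow, mul_pow, ← C_pow,
      ← pow_mul, ← pow_succ']
    simp only [mul_add, coeff_add, coeff_C_mul, coeff_X_pow, pow_succ',
      Nat.mul_left_cancel_iff Fintype.card_pos]
    split_ifs with h₁ h₂ <;> simp_all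
  | add f₁ f₂ _ _ h₁ h₂ =>
    simp only [add_comp, coeff_add, h₁, h₂]
    ring

theorem eq_C_mul_X_pow_of_carlitzT_comp_comm [IsDomain R] {t : R} {d : ℕ}
    (ht : ∀ m, 0 < m → m < d → t ^ Fintype.card k ^ m ≠ t) {ψ : R[X]}
    (hψ : ψ ∈ qPolynomials R (Fintype.card k)) (hdeg : ψ.natDegree ≤ Fintype.card k ^ d)
    (hψ₁ : ψ.coeff 1 = 0) (hcomm : (carlitzT k t).comp ψ = ψ.comp (carlitzT k t)) :
    ψ = C (ψ.coeff (Fintype.card k ^ d)) * X ^ Fintype.card k ^ d := by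
  set q := Fintype.card k
  have hrec (j : ℕ) : t * ψ.coeff (q ^ (j + 1)) + ψ.coeff (q ^ j) ^ q =
      ψ.coeff (q ^ (j + 1)) * t ^ q ^ (j + 1) + ψ.coeff (q ^ j) := by
    have h := congr_arg (coeff · (q * q ^ j)) hcomm
    rwa [coeff_card_mul_carlitzT_comp, coeff_card_mul_comp_carlitzT k t hψ, ← pow_succ'] at h
  have hlow (j : ℕ) (hj : j < d) : ψ.coeff (q ^ j) = 0 := by
    induction j with
    | zero => simpa using hψ₁
    | succ j ih =>
      have h := hrec j
      rw [ih (by omega), zero_pow Fintype.card_ne_zero, add_zero, add_zero, mul_comm] at h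
      by_contra hne
      exact ht (j + 1) j.succ_pos hj (mul_left_cancel₀ hne h).symm
  ext n
  rw [coeff_C_mul_X_pow]
  split_ifs with hn
  · rw [hn]
  · by_contra h
    obtain ⟨i, rfl⟩ := hψ n h
    rcases lt_trichotomy i d with hi | rfl | hi
    · exact h (hlow i hi)
    · exact hn rfl
    · exact h (coeff_eq_zero_of_natDegree_lt
        (hdeg.trans_lt (Nat.pow_lt_pow_right Fintype.one_lt_card hi)))

end Carlitz

end Polynomial

theorem AdjoinRoot.root_pow_card_pow_ne_root {k : Type*} [Field k] [Fintype k] {P : k[X]}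
    [Fact (Irreducible P)] {m : ℕ} (hm₀ : 0 < m) (hmP : m < P.natDegree) :
    root P ^ Fintype.card k ^ m ≠ root P := by
  intro h
  let pb := powerBasis (Fact.out : Irreducible P).ne_zero
  have : Module.Finite k (AdjoinRoot P) := pb.finite
  have : Finite (AdjoinRoot P) := Module.finite_of_finite k
  have hfrob : FiniteField.frobeniusAlgHom k (AdjoinRoot P) ^ m = 1 :=
    algHom_ext (by simpa [AlgHom.coe_pow, FiniteField.coe_frobeniusAlgHom, pow_iterate] using h)
  have hdvd := orderOf_dvd_of_pow_eq_one hfrob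
  rw [FiniteField.orderOf_frobeniusAlgHom, pb.finrank, powerBasis_dim] at hdvd
  exact (Nat.le_of_dvd hm₀ hdvd).not_gt hmP

section CarlitzModule

variable {k : Type*} [Field k] [Fintype k]

structure IsCarlitzModule (φ : k[X] → k[X][X]) : Prop where
  map_C : ∀ c : k, φ (C c) = C (C c) * X
  map_X : φ X = carlitzT k X
  map_add : ∀ a b, φ (a + b) = φ a + φ b
  map_mul : ∀ a b, φ (a * b) = (φ a).comp (φ b)

namespace IsCarlitzModule

variable {φ : k[X] → k[X][X]}

theorem map_zero (hφ : IsCarlitzModule φ) : φ 0 = 0 := by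
  simpa using hφ.map_add 0 0

theorem comp_comm (hφ : IsCarlitzModule φ) (a b : k[X]) :
    (φ a).comp (φ b) = (φ b).comp (φ a) := by
  rw [← hφ.map_mul, mul_comm, hφ.map_mul]

theorem mem_qPolynomials (hφ : IsCarlitzModule φ) (a : k[X]) :
    φ a ∈ qPolynomials k[X] (Fintype.card k) := by
  induction a using Polynomial.induction_on with
  | C c => rw [hφ.map_C, C_mul']; exact Submodule.smul_mem _ _ X_mem_qPolynomials
  | add a b ha hb => rw [hφ.map_add]; exact Submodule.add_mem _ ha hb
  | monomial n c ih =>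
    rw [pow_succ, ← mul_assoc, hφ.map_mul, hφ.map_X]
    exact comp_mem_qPolynomials k ih (carlitzT_mem_qPolynomials k X)

theorem coeff_zero (hφ : IsCarlitzModule φ) (a : k[X]) : (φ a).coeff 0 = 0 :=
  coeff_zero_eq_zero_of_mem_qPolynomials Fintype.card_ne_zero (hφ.mem_qPolynomials a)

theorem coeff_one (hφ : IsCarlitzModule φ) (a : k[X]) : (φ a).coeff 1 = a := by
  induction a using Polynomial.induction_on with
  | C c => simp [hφ.map_C]
  | add a b ha hb => rw [hφ.map_add, coeff_add, ha, hb]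
  | monomial n c ih =>
    rw [pow_succ, ← mul_assoc, hφ.map_mul, coeff_one_comp _ (hφ.coeff_zero X), ih, hφ.map_X]
    simp [carlitzT, (Fintype.one_lt_card (α := k)).ne]

theorem natDegree (hφ : IsCarlitzModule φ) {a : k[X]} (ha : a ≠ 0) :
    (φ a).natDegree = Fintype.card k ^ a.natDegree := by
  induction a using Polynomial.recOnHorner with
  | M0 => exact absurd rfl ha
  | MC p c hp₀ hc ih =>
    rw [hφ.map_add, hφ.map_C, natDegree_add_C]
    rcases eq_or_ne p 0 with rfl | hp
    · simp [hφ.map_zero, hc]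
    · have hp₁ : 1 ≤ p.natDegree := by
        by_contra! h
        exact hp (by rw [eq_C_of_natDegree_eq_zero (p := p) (by omega), hp₀, C_0])
      rw [natDegree_add_eq_left_of_natDegree_lt, ih hp]
      calc (C (C c) * X).natDegree ≤ 1 := (natDegree_C_mul_le _ _).trans natDegree_X_le
        _ < Fintype.card k := Fintype.one_lt_card
        _ ≤ (φ p).natDegree := by rw [ih hp]; exact Nat.le_self_pow (by omega) _
  | MX p hp ih =>
    rw [hφ.map_mul, natDegree_comp, ih hp, hφ.map_X, natDegree_carlitzT, natDegree_mul_X hp,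
      pow_succ]

theorem coeff_mem_span_singleton (hφ : IsCarlitzModule φ) {P : k[X]} (hP : Irreducible P)
    {n : ℕ} (hn : n ≠ Fintype.card k ^ P.natDegree) : (φ P).coeff n ∈ Ideal.span {P} := by
  have : Fact (Irreducible P) := ⟨hP⟩
  have hT : carlitzT k (AdjoinRoot.root P) = (φ X).map (AdjoinRoot.mk P) := by
    rw [hφ.map_X, map_carlitzT, AdjoinRoot.mk_X]
  have hred := eq_C_mul_X_pow_of_carlitzT_comp_comm k
    (fun m hm₀ hmP => AdjoinRoot.root_pow_card_pow_ne_root hm₀ hmP)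
    (map_mem_qPolynomials _ (hφ.mem_qPolynomials P))
    (natDegree_map_le.trans (hφ.natDegree hP.ne_zero).le)
    (by rw [coeff_map, hφ.coeff_one, AdjoinRoot.mk_self])
    (by rw [hT, ← map_comp, ← map_comp, hφ.comp_comm])
  have hcoeff := congr_arg (coeff · n) hred
  simp only [coeff_map, coeff_C_mul_X_pow, if_neg hn] at hcoeff
  exact Ideal.mem_span_singleton.mpr (AdjoinRoot.mk_eq_zero.mp hcoeff)

end IsCarlitzModule

end CarlitzModule

theorem stmt3_general (k : Type*) [Field k] [Fintype k] (q : ℕ) (hq : Fintype.card k = q)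
    (φ : Polynomial k → Polynomial (Polynomial k))
    (hφ_C : ∀ c : k, φ (C c) = C (C c) * X)
    (hφ_X : φ X = C (X : Polynomial k) * X + X ^ q)
    (hφ_add : ∀ a b : Polynomial k, φ (a + b) = φ a + φ b)
    (hφ_mul : ∀ a b : Polynomial k, φ (a * b) = (φ a).comp (φ b))
    (P : Polynomial k) (hP : Irreducible P)
    (d : ℕ) (hd : P.natDegree = d) :
    ∃ g : Polynomial (Polynomial k), φ P = X * g ∧
      g.natDegree = q ^ d - 1 ∧
      g.coeff 0 = P ∧
      ∀ i < g.natDegree, g.coeff i ∈ Ideal.span ({P} : Set (Polynomial k)) := by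
  subst hq hd
  have hφ : IsCarlitzModule φ := ⟨hφ_C, hφ_X, hφ_add, hφ_mul⟩
  have hdeg : (φ P).divX.natDegree = Fintype.card k ^ P.natDegree - 1 := by
    rw [natDegree_divX_eq_natDegree_tsub_one, hφ.natDegree hP.ne_zero]
  refine ⟨(φ P).divX, ?_, hdeg, by rw [coeff_divX, hφ.coeff_one], fun i hi => ?_⟩
  · simpa [hφ.coeff_zero] using (X_mul_divX_add (φ P)).symm
  · rw [coeff_divX]
    exact hφ.coeff_mem_span_singleton hP (by omega)

/-- Let `k` be a finite field of `q` elements, `A = k[T]`, `φ` the Carlitz module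
(realized as a family of polynomials `φ a ∈ A[x]` with the defining properties),
and `𝔭 = (P) ⊂ A` a maximal ideal generated by a monic irreducible `P` of degree `d`.
Then `φ_P(x)/x` has degree `q^d - 1`, its constant term is `P`, and all its
non-leading coefficients lie in `𝔭` (Eisenstein at `𝔭` up to the leading coefficient). -/
theorem stmt3 (k : Type*) [Field k] [Fintype k] (q : ℕ) (hq : Fintype.card k = q)
    (φ : Polynomial k → Polynomial (Polynomial k))
    (hφ_C : ∀ c : k, φ (C c) = C (C c) * X)
    (hφ_X : φ X = C (X : Polynomial k) * X + X ^ q)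
    (hφ_add : ∀ a b : Polynomial k, φ (a + b) = φ a + φ b)
    (hφ_mul : ∀ a b : Polynomial k, φ (a * b) = (φ a).comp (φ b))
    (P : Polynomial k) (hP : Irreducible P) (hPm : P.Monic)
    (d : ℕ) (hd : P.natDegree = d) :
    ∃ g : Polynomial (Polynomial k), φ P = X * g ∧
      g.natDegree = q ^ d - 1 ∧
      g.coeff 0 = P ∧
      ∀ i < g.natDegree, g.coeff i ∈ Ideal.span ({P} : Set (Polynomial k)) :=
  stmt3_general k q hq φ hφ_C hφ_X hφ_add hφ_mul P hP d hd
end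

section
/- Let F be a field, Δ a finite abelian group with |Δ| invertible in F, F a splitting field for Δ, and let α : M → N be a map of finite-dimensional F[Δ]-modules. If ker α embeds into a cyclic F[Δ]-module and coker α is a quotient of a cyclic F[Δ]-module, then for every character χ of Δ: dim_F N(χ) ≤ dim_F M(χ) + 1 and dim_F M(χ) ≤ dim_F N(χ) + 1. -/
/-- The `χ`-isotypic component of a representation. -/
def isotypic {F : Type*} [Field F] {M : Type*} [AddCommGroup M] [Module F M]
    {G : Type*} [Group G] (ρ : G →* (M →ₗ[F] M)) (χ : G →* Fˣ) : Submodule F M :=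
  ⨅ g : G, Module.End.eigenspace (ρ g) (χ g : F)

open Module Submodule

section Helpers

variable {F : Type*} [Field F] {Δ : Type*} [CommGroup Δ] [Fintype Δ]
variable {V : Type*} [AddCommGroup V] [Module F V]

lemma mem_isotypic_iff {ρ : Δ →* (V →ₗ[F] V)} {χ : Δ →* Fˣ} {x : V} :
    x ∈ isotypic ρ χ ↔ ∀ g, ρ g x = (χ g : F) • x := by
  simp [isotypic, Submodule.mem_iInf, Module.End.mem_eigenspace_iff]

/-- The averaging projector onto the `χ`-isotypic component. -/
noncomputable def projIso (ρ : Δ →* (V →ₗ[F] V)) (χ : Δ →* Fˣ) : V →ₗ[F] V :=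
  (Fintype.card Δ : F)⁻¹ • ∑ g : Δ, ((((χ g)⁻¹ : Fˣ) : F) • ρ g)

lemma projIso_apply (ρ : Δ →* (V →ₗ[F] V)) (χ : Δ →* Fˣ) (x : V) :
    projIso ρ χ x =
      (Fintype.card Δ : F)⁻¹ • ∑ g : Δ, ((((χ g)⁻¹ : Fˣ) : F) • ρ g x) := by
  simp [projIso]

lemma projIso_rho (ρ : Δ →* (V →ₗ[F] V)) (χ : Δ →* Fˣ) (h : Δ) (x : V) :
    projIso ρ χ (ρ h x) = (χ h : F) • projIso ρ χ x := by
  rw [projIso_apply, projIso_apply, smul_comm ((χ h : F)) ((Fintype.card Δ : F)⁻¹)]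
  congr 1
  rw [Finset.smul_sum]
  refine Fintype.sum_equiv (Equiv.mulRight h) _ _ fun g => ?_
  simp only [Equiv.coe_mulRight]
  have h1 : ρ g (ρ h x) = ρ (g * h) x := by
    rw [map_mul]; rfl
  have h2 : (((χ g)⁻¹ : Fˣ) : F) = (χ h : F) * (((χ (g * h))⁻¹ : Fˣ) : F) := by
    rw [← Units.val_mul]
    congr 1
    rw [map_mul, mul_inv, mul_comm (χ h), mul_assoc, inv_mul_cancel, mul_one]
  rw [h1, h2, mul_smul]

lemma rho_projIso (ρ : Δ →* (V →ₗ[F] V)) (χ : Δ →* Fˣ) (h : Δ) (x : V) :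
    ρ h (projIso ρ χ x) = (χ h : F) • projIso ρ χ x := by
  have : ρ h (projIso ρ χ x) = projIso ρ χ (ρ h x) := by
    rw [projIso_apply, projIso_apply, map_smul, map_sum]
    congr 1
    refine Finset.sum_congr rfl fun g _ => ?_
    rw [map_smul]
    congr 1
    rw [← Module.End.mul_apply, ← Module.End.mul_apply, ← map_mul, ← map_mul, mul_comm]
  rw [this, projIso_rho]

lemma projIso_mem (ρ : Δ →* (V →ₗ[F] V)) (χ : Δ →* Fˣ) (x : V) :
    projIso ρ χ x ∈ isotypic ρ χ :=
  mem_isotypic_iff.2 fun g => rho_projIso ρ χ g x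

lemma projIso_eq_self (hΔ : (Fintype.card Δ : F) ≠ 0) (ρ : Δ →* (V →ₗ[F] V))
    (χ : Δ →* Fˣ) {x : V} (hx : x ∈ isotypic ρ χ) : projIso ρ χ x = x := by
  rw [mem_isotypic_iff] at hx
  rw [projIso_apply]
  have : ∀ g : Δ, (((χ g)⁻¹ : Fˣ) : F) • ρ g x = x := by
    intro g
    rw [hx g, smul_smul, ← Units.val_mul, inv_mul_cancel, Units.val_one, one_smul]
  rw [Finset.sum_congr rfl fun g _ => this g]
  simp only [Finset.sum_const, Finset.card_univ, smul_smul, ← Nat.cast_smul_eq_nsmul F]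
  rw [inv_mul_cancel₀ hΔ, one_smul]

/-- In a cyclic module, the projector image lies in the line spanned by `projIso m`. -/
lemma projIso_cyclic (ρ : Δ →* (V →ₗ[F] V)) (χ : Δ →* Fˣ) (m : V)
    (hcyc : ∀ x : V, x ∈ Submodule.span F (Set.range fun g : Δ => ρ g m)) (x : V) :
    projIso ρ χ x ∈ Submodule.span F {projIso ρ χ m} := by
  have hx := hcyc x
  induction hx using Submodule.span_induction with
  | mem y hy =>
    obtain ⟨g, rfl⟩ := hy
    rw [projIso_rho]
    exact Submodule.smul_mem _ _ (Submodule.mem_span_singleton_self _)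
  | zero => rw [map_zero]; exact Submodule.zero_mem _
  | add y z _ _ hy hz => rw [map_add]; exact Submodule.add_mem _ hy hz
  | smul c y _ hy => rw [map_smul]; exact Submodule.smul_mem _ _ hy

lemma isotypic_le_span (hΔ : (Fintype.card Δ : F) ≠ 0) (ρ : Δ →* (V →ₗ[F] V))
    (χ : Δ →* Fˣ) (m : V)
    (hcyc : ∀ x : V, x ∈ Submodule.span F (Set.range fun g : Δ => ρ g m)) :
    isotypic ρ χ ≤ Submodule.span F {projIso ρ χ m} := fun x hx => by
  rw [← projIso_eq_self hΔ ρ χ hx]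
  exact projIso_cyclic ρ χ m hcyc x

lemma finrank_span_singleton_le' (v : V) :
    finrank F (Submodule.span F ({v} : Set V)) ≤ 1 := by
  by_cases h : v = 0
  · subst h
    rw [Submodule.span_zero_singleton]
    simp
  · exact le_of_eq (finrank_span_singleton h)

end Helpers

/-- Let `F` be a field, `Δ` a finite abelian group with `|Δ|` invertible in `F` and `F`
a splitting field for `Δ`, and `α : M → N` a `Δ`-equivariant `F`-linear map of
finite-dimensional `F[Δ]`-modules.  If `ker α` embeds `Δ`-equivariantly into a cyclic
`F[Δ]`-module and `coker α` is a `Δ`-equivariant quotient of a cyclic `F[Δ]`-module,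
then for every character `χ` of `Δ` we have `dim N(χ) ≤ dim M(χ) + 1` and
`dim M(χ) ≤ dim N(χ) + 1`. -/
theorem stmt14 (F : Type*) [Field F] (Δ : Type*) [CommGroup Δ] [Fintype Δ]
    (hΔ : (Fintype.card Δ : F) ≠ 0)
    (hsplit : ∃ ζ : F, IsPrimitiveRoot ζ (Monoid.exponent Δ))
    (M N : Type*) [AddCommGroup M] [Module F M] [FiniteDimensional F M]
    [AddCommGroup N] [Module F N] [FiniteDimensional F N]
    (ρM : Δ →* (M →ₗ[F] M)) (ρN : Δ →* (N →ₗ[F] N))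
    (α : M →ₗ[F] N) (hα : ∀ g : Δ, α ∘ₗ ρM g = ρN g ∘ₗ α)
    (hker : ∃ (C : Type) (_ : AddCommGroup C) (_ : Module F C)
      (ρC : Δ →* (C →ₗ[F] C)) (m : C),
        (∀ x : C, x ∈ Submodule.span F (Set.range fun g : Δ => ρC g m)) ∧
        ∃ j : ↥(LinearMap.ker α) →ₗ[F] C, Function.Injective j ∧
          ∀ (g : Δ) (x y : ↥(LinearMap.ker α)), (x : M) = ρM g y → j x = ρC g (j y))
    (hcoker : ∃ (D : Type) (_ : AddCommGroup D) (_ : Module F D)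
      (ρD : Δ →* (D →ₗ[F] D)) (m : D),
        (∀ x : D, x ∈ Submodule.span F (Set.range fun g : Δ => ρD g m)) ∧
        ∃ π : D →ₗ[F] (N ⧸ LinearMap.range α), Function.Surjective π ∧
          ∀ (g : Δ) (d : D) (n : N), π d = Submodule.Quotient.mk n →
            π (ρD g d) = Submodule.Quotient.mk (ρN g n)) :
    ∀ χ : Δ →* Fˣ,
      Module.finrank F (isotypic ρN χ) ≤ Module.finrank F (isotypic ρM χ) + 1 ∧
      Module.finrank F (isotypic ρM χ) ≤ Module.finrank F (isotypic ρN χ) + 1 := by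
  intro χ
  have hαcomm : ∀ (g : Δ) (x : M), α (ρM g x) = ρN g (α x) := fun g x =>
    LinearMap.congr_fun (hα g) x
  constructor
  · -- dim N(χ) ≤ dim M(χ) + 1
    obtain ⟨D, _, _, ρD, m, hcyc, π, hπsurj, hπequiv⟩ := hcoker
    -- the map N(χ) → N/range α
    set f : ↥(isotypic ρN χ) →ₗ[F] (N ⧸ LinearMap.range α) :=
      (LinearMap.range α).mkQ ∘ₗ (isotypic ρN χ).subtype with hf
    have hrn := LinearMap.finrank_range_add_finrank_ker f
    -- kernel bound: surjection from M(χ)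
    have hker_le : finrank F (LinearMap.ker f) ≤ finrank F (isotypic ρM χ) := by
      have hmemN : ∀ x ∈ isotypic ρM χ, α x ∈ isotypic ρN χ := by
        intro x hx
        rw [mem_isotypic_iff] at hx ⊢
        intro g
        rw [← hαcomm, hx g, map_smul]
      set ψ : ↥(isotypic ρM χ) →ₗ[F] ↥(LinearMap.ker f) :=
        { toFun := fun x => ⟨⟨α (x : M), hmemN (x : M) x.2⟩, by
            simp only [LinearMap.mem_ker, hf, LinearMap.comp_apply, Submodule.subtype_apply,
              Submodule.mkQ_apply, Submodule.Quotient.mk_eq_zero]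
            exact LinearMap.mem_range_self α (x : M)⟩
          map_add' := fun x y => by ext; simp
          map_smul' := fun c x => by ext; simp } with hψ
      have hψsurj : Function.Surjective ψ := by
        rintro ⟨⟨n, hn⟩, hn0⟩
        have hnr : n ∈ LinearMap.range α := by
          simpa [hf, Submodule.Quotient.mk_eq_zero] using hn0
        obtain ⟨m0, hm0⟩ := hnr
        refine ⟨⟨projIso ρM χ m0, projIso_mem ρM χ m0⟩, ?_⟩
        have hkey : α (projIso ρM χ m0) = n := by
          have hc : α (projIso ρM χ m0) = projIso ρN χ (α m0) := by
            rw [projIso_apply, projIso_apply, map_smul, map_sum]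
            congr 1
            exact Finset.sum_congr rfl fun g _ => by rw [map_smul, hαcomm]
          rw [hc, hm0, projIso_eq_self hΔ ρN χ hn]
        ext
        exact hkey
      calc finrank F (LinearMap.ker f)
          = finrank F (⊤ : Submodule F ↥(LinearMap.ker f)) := (finrank_top F _).symm
        _ = finrank F (LinearMap.range ψ) := by
            rw [LinearMap.range_eq_top.2 hψsurj]
        _ ≤ finrank F (isotypic ρM χ) := LinearMap.finrank_range_le ψ
    -- range bound: range f lies in a line
    have hrange_le : finrank F (LinearMap.range f) ≤ 1 := by
      have hle : LinearMap.range f ≤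
          Submodule.span F {π (projIso ρD χ m)} := by
        rintro _ ⟨x, rfl⟩
        obtain ⟨d, hd⟩ := hπsurj (f x)
        have hfx : f x = Submodule.Quotient.mk (x : N) := rfl
        have hπd : π d = Submodule.Quotient.mk (x : N) := by rw [hd, hfx]
        have hkey : π (projIso ρD χ d) = f x := by
          rw [projIso_apply, map_smul, map_sum]
          have hterm : ∀ g : Δ, π ((((χ g)⁻¹ : Fˣ) : F) • ρD g d) =
              (((χ g)⁻¹ : Fˣ) : F) • Submodule.Quotient.mk (ρN g (x : N)) := by
            intro g
            rw [map_smul, hπequiv g d (x : N) hπd]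
          rw [Finset.sum_congr rfl fun g _ => hterm g, hfx]
          have : ((Fintype.card Δ : F)⁻¹ •
              ∑ g : Δ, (((χ g)⁻¹ : Fˣ) : F) •
                (Submodule.Quotient.mk (ρN g (x : N)) : N ⧸ LinearMap.range α)) =
              Submodule.Quotient.mk (projIso ρN χ (x : N)) := by
            rw [projIso_apply]
            simp only [← Submodule.Quotient.mk_smul, ← Submodule.mkQ_apply, ← map_sum, ← map_smul]
          rw [this, projIso_eq_self hΔ ρN χ x.2]
        rw [← hkey]
        have hmem := projIso_cyclic ρD χ m hcyc d
        rw [Submodule.mem_span_singleton] at hmem ⊢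
        obtain ⟨c, hc⟩ := hmem
        exact ⟨c, by rw [← hc, map_smul]⟩
      calc finrank F (LinearMap.range f)
          ≤ finrank F (Submodule.span F {π (projIso ρD χ m)}) := Submodule.finrank_mono hle
        _ ≤ 1 := finrank_span_singleton_le' _
    omega
  · -- dim M(χ) ≤ dim N(χ) + 1
    obtain ⟨C, _, _, ρC, m, hcyc, j, hjinj, hjequiv⟩ := hker
    have hmemN : ∀ x ∈ isotypic ρM χ, α x ∈ isotypic ρN χ := by
      intro x hx
      rw [mem_isotypic_iff] at hx ⊢
      intro g
      rw [← hαcomm, hx g, map_smul]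
    set f : ↥(isotypic ρM χ) →ₗ[F] ↥(isotypic ρN χ) := α.restrict hmemN with hf
    have hrn := LinearMap.finrank_range_add_finrank_ker f
    have hrange_le : finrank F (LinearMap.range f) ≤ finrank F (isotypic ρN χ) :=
      Submodule.finrank_le _
    have hker_le : finrank F (LinearMap.ker f) ≤ 1 := by
      -- map ker f → span {projIso ρC χ m}
      set S := Submodule.span F ({projIso ρC χ m} : Set C) with hS
      have hxker : ∀ x : ↥(LinearMap.ker f), α ((x : ↥(isotypic ρM χ)) : M) = 0 := by
        intro x
        have h0 : f (x : ↥(isotypic ρM χ)) = 0 := LinearMap.mem_ker.1 x.2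
        have h1 : ((f (x : ↥(isotypic ρM χ)) : ↥(isotypic ρN χ)) : N) =
            α ((x : ↥(isotypic ρM χ)) : M) := rfl
        rw [h0] at h1
        simpa using h1.symm
      set k : ↥(LinearMap.ker f) →ₗ[F] ↥(LinearMap.ker α) :=
        { toFun := fun x => ⟨((x : ↥(isotypic ρM χ)) : M), LinearMap.mem_ker.2 (hxker x)⟩
          map_add' := fun x y => by ext; rfl
          map_smul' := fun c x => by ext; rfl } with hk
      have hkinj : Function.Injective k := by
        intro x y hxy
        have h := congrArg Subtype.val hxy
        exact Subtype.ext (Subtype.ext h)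
      have hmemS : ∀ x : ↥(LinearMap.ker f), j (k x) ∈ S := by
        intro x
        refine isotypic_le_span hΔ ρC χ m hcyc ?_
        rw [mem_isotypic_iff]
        intro g
        have hiso := (mem_isotypic_iff.1 (x : ↥(isotypic ρM χ)).2) g
        have h2 : ((((χ g : F) • k x : ↥(LinearMap.ker α))) : M) = ρM g ((k x : M)) := by
          simp only [SetLike.val_smul]
          exact hiso.symm
        have h3 := hjequiv g ((χ g : F) • k x) (k x) h2
        rw [map_smul] at h3
        exact h3.symm
      set φ : ↥(LinearMap.ker f) →ₗ[F] ↥S := (j ∘ₗ k).codRestrict S hmemS with hφ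
      have hφinj : Function.Injective φ := by
        intro x y hxy
        have : j (k x) = j (k y) := congrArg Subtype.val hxy
        exact hkinj (hjinj this)
      calc finrank F (LinearMap.ker f)
          ≤ finrank F ↥S := LinearMap.finrank_le_finrank_of_injective hφinj
        _ ≤ 1 := finrank_span_singleton_le' _
    omega
end
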